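/- (Harmonic series / Euler–Mascheroni estimate, display (4.1)) For every integer n ≥ 2, γ + 1/(2(n+1)) < Σ_{k=1}^n 1/k − log n < γ + 1/(2(n−1)), where γ is the Euler–Mascheroni constant. -/
import Mathlib

open Filter Topology Real

-- two-sided log bounds from the power series in 1/(2a+1)
lemma log_lower {a : ℝ} (ha : 0 < a) :
    2 / (2 * a + 1) + (2 / 3) * (1 / (2 * a + 1)) ^ 3 ≤ Real.log (1 + a⁻¹) := by
  have h := Real.hasSum_log_one_add_inv ha
  set y : ℝ := 1 / (2 * a + 1) with hy
  have hy0 : 0 < y := by positivity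
  have := sum_le_hasSum ({0, 1} : Finset ℕ)
    (fun k _ ↦ by positivity) h
  simpa [Finset.sum_insert, Finset.mem_singleton] using
    le_trans (le_of_eq (by norm_num; ring)) this

lemma log_upper {a : ℝ} (ha : 0 < a) :
    Real.log (1 + a⁻¹) ≤ 2 / (2 * a + 1) + 1 / (6 * a * (a + 1) * (2 * a + 1)) := by
  have h := Real.hasSum_log_one_add_inv ha
  set y : ℝ := 1 / (2 * a + 1) with hy
  have hy0 : 0 < y := by positivity
  have hy1 : y < 1 := by
    rw [hy, div_lt_one (by linarith)]; linarith
  have hysq : y ^ 2 < 1 := by nlinarith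
  -- majorant: g 0 = 2y - (2/3) y, g k = (2/3) y^{2k+1} summed via geometric
  have hgeo : HasSum (fun k : ℕ ↦ (2 / 3) * y * (y ^ 2) ^ k)
      ((2 / 3) * y * (1 / (1 - y ^ 2))) := by
    have := hasSum_geometric_of_lt_one (by positivity : (0:ℝ) ≤ y ^ 2) hysq
    simpa [one_div] using this.mul_left ((2 / 3) * y)
  have hspike : HasSum (fun k : ℕ ↦ if k = 0 then 2 * y - (2 / 3) * y else 0)
      (2 * y - (2 / 3) * y) := by
    simpa using hasSum_ite_eq (0 : ℕ) (2 * y - (2 / 3) * y)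
  have hg : HasSum (fun k : ℕ ↦ (if k = 0 then 2 * y - (2 / 3) * y else 0)
      + (2 / 3) * y * (y ^ 2) ^ k)
      ((2 * y - (2 / 3) * y) + (2 / 3) * y * (1 / (1 - y ^ 2))) := hspike.add hgeo
  have hle : ∀ k : ℕ, (2 : ℝ) * (1 / (2 * k + 1)) * y ^ (2 * k + 1) ≤
      (if k = 0 then 2 * y - (2 / 3) * y else 0) + (2 / 3) * y * (y ^ 2) ^ k := by
    intro k
    rcases Nat.eq_zero_or_pos k with rfl | hk
    · norm_num
    · have h1 : (1 : ℝ) ≤ k := by exact_mod_cast hk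
      have : (2 : ℝ) * (1 / (2 * k + 1)) ≤ 2 / 3 := by
        rw [mul_one_div, div_le_div_iff₀ (by linarith) (by norm_num)]; linarith
      have hpow : y ^ (2 * k + 1) = y * (y ^ 2) ^ k := by
        rw [← pow_mul]; ring
      rw [if_neg hk.ne', zero_add, hpow]
      calc 2 * (1 / (2 * (k:ℝ) + 1)) * (y * (y ^ 2) ^ k)
          ≤ (2/3) * (y * (y^2)^k) := by
            apply mul_le_mul_of_nonneg_right this (by positivity)
        _ = (2/3) * y * (y^2)^k := by ring
  have := hasSum_le hle h hg
  have h1y : 1 - y ^ 2 = 4 * a * (a + 1) / (2 * a + 1) ^ 2 := by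
    rw [hy]; field_simp; ring
  calc Real.log (1 + a⁻¹) ≤ (2 * y - (2 / 3) * y) + (2 / 3) * y * (1 / (1 - y ^ 2)) := this
    _ = 2 / (2 * a + 1) + 1 / (6 * a * (a + 1) * (2 * a + 1)) := by
        rw [h1y, hy]; field_simp; ring

lemma keyA {x : ℝ} (hx : 2 ≤ x) :
    Real.log (1 + x⁻¹) < 1 / (x + 1) - 1 / (2 * x) + 1 / (2 * (x - 1)) := by
  refine lt_of_le_of_lt (log_upper (by linarith)) ?_
  rw [← sub_pos]
  have h1 : (0:ℝ) < x := by linarith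
  have h2 : (0:ℝ) < x - 1 := by linarith
  have h3 : (0:ℝ) < x + 1 := by linarith
  have h4 : (0:ℝ) < 2 * x + 1 := by linarith
  have key : 1 / (x + 1) - 1 / (2 * x) + 1 / (2 * (x - 1)) -
      (2 / (2 * x + 1) + 1 / (6 * x * (x + 1) * (2 * x + 1))) =
      (14 * x + 4) / (6 * x * (x + 1) * (x - 1) * (2 * x + 1)) := by
    field_simp
    ring
  rw [key]
  exact div_pos (by linarith)
    (mul_pos (mul_pos (mul_pos (mul_pos (by norm_num : (0:ℝ) < 6) h1) h3) h2) h4)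

lemma keyB {x : ℝ} (hx : 2 ≤ x) :
    1 / (x + 1) + 1 / (2 * (x + 1)) - 1 / (2 * (x + 2)) < Real.log (1 + x⁻¹) := by
  have h1 : (0:ℝ) < x := by linarith
  have h3 : (0:ℝ) < x + 1 := by linarith
  have h4 : (0:ℝ) < 2 * x + 1 := by linarith
  have h5 : (0:ℝ) < x + 2 := by linarith
  refine lt_of_lt_of_le ?_ (log_lower h1)
  have hy : (0:ℝ) < (1 / (2 * x + 1)) ^ 3 := by positivity
  have key : 2 / (2 * x + 1) - (1 / (x + 1) + 1 / (2 * (x + 1)) - 1 / (2 * (x + 2))) =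
      3 / (2 * (x + 1) * (x + 2) * (2 * x + 1)) := by
    field_simp
    ring
  nlinarith [show (0:ℝ) < 3 / (2 * (x + 1) * (x + 2) * (2 * x + 1)) by positivity]

lemma hlog_split (m : ℕ) (hm : 1 ≤ m) :
    Real.log ((m:ℝ) + 1) = Real.log m + Real.log (1 + (m:ℝ)⁻¹) := by
  have h0 : (0:ℝ) < m := by exact_mod_cast hm
  rw [← Real.log_mul (ne_of_gt h0) (by positivity)]
  congr 1
  field_simp

noncomputable def fseq (n : ℕ) : ℝ := (harmonic n : ℝ) - Real.log n - 1 / (2 * ((n : ℝ) - 1))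

noncomputable def gseq (n : ℕ) : ℝ := (harmonic n : ℝ) - Real.log n - 1 / (2 * ((n : ℝ) + 1))

lemma fseq_lt_succ {m : ℕ} (hm : 2 ≤ m) : fseq m < fseq (m + 1) := by
  have hm1 : 1 ≤ m := by omega
  have hx : (2 : ℝ) ≤ m := by exact_mod_cast hm
  have hcast : (harmonic (m + 1) : ℝ) = (harmonic m : ℝ) + 1 / ((m : ℝ) + 1) := by
    push_cast [harmonic_succ]
    ring
  have hA := keyA hx
  unfold fseq
  push_cast
  rw [hcast, hlog_split m hm1]
  have h1 : (m : ℝ) + 1 - 1 = (m : ℝ) := by ring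
  rw [h1]
  linarith

lemma gseq_succ_lt {m : ℕ} (hm : 2 ≤ m) : gseq (m + 1) < gseq m := by
  have hm1 : 1 ≤ m := by omega
  have hx : (2 : ℝ) ≤ m := by exact_mod_cast hm
  have hcast : (harmonic (m + 1) : ℝ) = (harmonic m : ℝ) + 1 / ((m : ℝ) + 1) := by
    push_cast [harmonic_succ]
    ring
  have hB := keyB hx
  unfold gseq
  push_cast
  rw [hcast, hlog_split m hm1]
  have h1 : (m : ℝ) + 1 + 1 = (m : ℝ) + 2 := by ring
  rw [h1]
  linarith

lemma fseq_mono {a b : ℕ} (ha : 2 ≤ a) (hab : a ≤ b) : fseq a ≤ fseq b := by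
  induction b, hab using Nat.le_induction with
  | base => exact le_refl _
  | succ m hm ih => exact ih.trans (fseq_lt_succ (ha.trans hm)).le

lemma gseq_anti {a b : ℕ} (ha : 2 ≤ a) (hab : a ≤ b) : gseq b ≤ gseq a := by
  induction b, hab using Nat.le_induction with
  | base => exact le_refl _
  | succ m hm ih => exact (gseq_succ_lt (ha.trans hm)).le.trans ih

lemma tendsto_aux (c : ℝ) :
    Tendsto (fun n : ℕ ↦ 1 / (2 * ((n : ℝ) + c))) atTop (𝓝 0) := by
  have h1 : Tendsto (fun n : ℕ ↦ 2 * ((n : ℝ) + c)) atTop atTop := by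
    apply Tendsto.const_mul_atTop two_pos
    exact tendsto_atTop_add_const_right _ c tendsto_natCast_atTop_atTop
  simp only [one_div]
  exact h1.inv_tendsto_atTop

lemma fseq_tendsto : Tendsto fseq atTop (𝓝 Real.eulerMascheroniConstant) := by
  have h := Real.tendsto_harmonic_sub_log.sub (tendsto_aux (-1))
  rw [sub_zero] at h
  exact h.congr fun n ↦ by unfold fseq; ring

lemma gseq_tendsto : Tendsto gseq atTop (𝓝 Real.eulerMascheroniConstant) := by
  have h := Real.tendsto_harmonic_sub_log.sub (tendsto_aux 1)
  rw [sub_zero] at h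
  exact h.congr fun n ↦ by unfold gseq; ring

/-- **(Harmonic series / Euler–Mascheroni estimate, display (4.1).)** For every integer
`n ≥ 2`, `γ + 1/(2(n+1)) < ∑_{k=1}^n 1/k − log n < γ + 1/(2(n−1))`, where `γ` is the
Euler–Mascheroni constant. -/
theorem harmonic_sub_log_euler_mascheroni_bounds (n : ℕ) (hn : 2 ≤ n) :
    Real.eulerMascheroniConstant + 1 / (2 * ((n : ℝ) + 1)) <
        (∑ k ∈ Finset.Icc 1 n, (1 : ℝ) / k) - Real.log n ∧
      (∑ k ∈ Finset.Icc 1 n, (1 : ℝ) / k) - Real.log n <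
        Real.eulerMascheroniConstant + 1 / (2 * ((n : ℝ) - 1)) := by
  have hsum : (∑ k ∈ Finset.Icc 1 n, (1 : ℝ) / k) = (harmonic n : ℝ) := by
    rw [harmonic_eq_sum_Icc]
    push_cast
    simp [one_div]
  have hf : fseq n < Real.eulerMascheroniConstant := by
    refine (fseq_lt_succ hn).trans_le ?_
    refine ge_of_tendsto fseq_tendsto ?_
    filter_upwards [eventually_ge_atTop (n + 1)] with m hm
    exact fseq_mono (by omega) hm
  have hg : Real.eulerMascheroniConstant < gseq n := by
    refine lt_of_le_of_lt ?_ (gseq_succ_lt hn)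
    refine le_of_tendsto gseq_tendsto ?_
    filter_upwards [eventually_ge_atTop (n + 1)] with m hm
    exact gseq_anti (by omega) hm
  rw [hsum]
  unfold fseq at hf
  unfold gseq at hg
  constructor <;> linarith
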